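/- Let (X,d) be a metric space and μ a Borel measure on X, finite and positive on balls; write V(x,r)=μ(B(x,r)). Fix m≥2, D≥1 and κ∈[0,m/(m−1)), and assume condition (II.2): V(x,τr) ≤ D τ^D V(x,r) exp(τ^κ + r^κ) for all x∈X, τ≥1, r>0. Let p:(0,∞)×X×X→[0,∞) be measurable, symmetric, with the semigroup property p_{s+t}(x,y)=∫_X p_s(x,z)p_t(z,y) dμ(z), and satisfy the short-time bound (II.3): there are A,c>0 with p_t(x,y) ≤ A·V(x,t^{1/m})^{−1}·exp(−c(d(x,y)^m/t)^{1/(m−1)}) for all t∈(0,1], x,y∈X. Then there exist constants C, c′ > 0 such that for all t∈(0,1] and x,y∈X, p_{2t}(x,y) ≤ C · V(y,(2t)^{1/m})^{−1} · exp(−c′ (d(x,y)^m/t)^{1/(m−1)} + (2t)^{κ/m}). -/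
import Mathlib


open MeasureTheory Metric Real

set_option maxHeartbeats 1000000

open scoped ENNReal

lemma aux_summable (D κ c β : ℝ) (hD : 0 ≤ D) (hκ0 : 0 ≤ κ) (hκ2 : κ ≤ 2)
    (hc : 0 < c) (hβ1 : 1 ≤ β) (hκβ : κ < β) :
    Summable (fun k : ℕ => ((k : ℝ) + 1) ^ D * Real.exp (((k : ℝ) + 1) ^ κ - c * (k : ℝ) ^ β)) := by
  set n : ℕ := ⌈D⌉₊ with hn
  set q : ℝ := Real.exp (-(c/2)) with hq
  have hq0 : 0 < q := Real.exp_pos _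
  have hq1 : q < 1 := Real.exp_lt_one_iff.mpr (by linarith)
  set N : ℕ := max 1 ⌈(8/c) ^ (1/(β - κ))⌉₊ with hN
  -- comparison sequence
  have hv : Summable (fun k : ℕ => ((k : ℝ) + 1) ^ n * q ^ k) := by
    have h1 : Summable (fun k : ℕ => ((k : ℝ)) ^ n * q ^ k) :=
      summable_pow_mul_geometric_of_norm_lt_one n (by rw [norm_eq_abs, abs_of_pos hq0]; exact hq1)
    have h2 : Summable (fun k : ℕ => ((k + 1 : ℕ) : ℝ) ^ n * q ^ (k + 1)) :=
      (summable_nat_add_iff 1).2 h1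
    have h3 := h2.mul_right q⁻¹
    refine h3.congr fun k => ?_
    have hcast : ((k + 1 : ℕ) : ℝ) = (k : ℝ) + 1 := by push_cast; ring
    rw [hcast, pow_succ, mul_assoc, mul_assoc, mul_inv_cancel₀ hq0.ne', mul_one]
  rw [← summable_nat_add_iff N]
  refine Summable.of_nonneg_of_le (fun j => by positivity) (fun j => ?_)
      ((summable_nat_add_iff N).2 hv)
  set k : ℕ := j + N with hk
  have hk1 : (1 : ℝ) ≤ (k : ℝ) := by
    have : 1 ≤ k := le_trans (le_max_left _ _) (Nat.le_add_left N j)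
    exact_mod_cast this
  have hk0 : (0 : ℝ) < (k : ℝ) := by linarith
  -- power factor
  have hpow : ((k : ℝ) + 1) ^ D ≤ ((k : ℝ) + 1) ^ n := by
    rw [← Real.rpow_natCast ((k : ℝ) + 1) n]
    exact Real.rpow_le_rpow_of_exponent_le (by linarith) (Nat.le_ceil D)
  -- exponential factor
  have hexp : Real.exp (((k : ℝ) + 1) ^ κ - c * (k : ℝ) ^ β) ≤ q ^ k := by
    rw [hq, ← Real.exp_nat_mul]
    apply Real.exp_le_exp.2
    have h4 : ((k : ℝ) + 1) ^ κ ≤ 4 * (k : ℝ) ^ κ := by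
      calc ((k : ℝ) + 1) ^ κ ≤ (2 * (k : ℝ)) ^ κ :=
            Real.rpow_le_rpow (by linarith) (by linarith) hκ0
        _ = 2 ^ κ * (k : ℝ) ^ κ := Real.mul_rpow (by norm_num) hk0.le
        _ ≤ 4 * (k : ℝ) ^ κ := by
            have : (2 : ℝ) ^ κ ≤ 2 ^ (2 : ℝ) :=
              Real.rpow_le_rpow_of_exponent_le (by norm_num) hκ2
            have h24 : (2 : ℝ) ^ (2 : ℝ) = 4 := by
              rw [show (2:ℝ) = ((2:ℕ):ℝ) by norm_num, Real.rpow_natCast]; norm_num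
            nlinarith [Real.rpow_nonneg hk0.le κ]
    have hbig : 8 / c ≤ (k : ℝ) ^ (β - κ) := by
      have ha0 : (0 : ℝ) ≤ (8/c) ^ (1/(β-κ)) := Real.rpow_nonneg (by positivity) _
      have hak : (8/c) ^ (1/(β-κ)) ≤ (k : ℝ) := by
        calc (8/c) ^ (1/(β-κ)) ≤ (⌈(8/c) ^ (1/(β-κ))⌉₊ : ℝ) := Nat.le_ceil _
          _ ≤ (N : ℝ) := by exact_mod_cast Nat.cast_le.2 (le_max_right _ _)
          _ ≤ (k : ℝ) := by exact_mod_cast Nat.cast_le.2 (Nat.le_add_left N j)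
      calc (8/c) = ((8/c) ^ (1/(β-κ))) ^ (β - κ) := by
            rw [← Real.rpow_mul (by positivity), one_div_mul_cancel (by linarith), Real.rpow_one]
        _ ≤ (k : ℝ) ^ (β - κ) := Real.rpow_le_rpow ha0 hak (by linarith)
    have hsplit : (k : ℝ) ^ β = (k : ℝ) ^ κ * (k : ℝ) ^ (β - κ) := by
      rw [← Real.rpow_add hk0]; ring_nf
    have h8 : 8 * (k : ℝ) ^ κ ≤ c * (k : ℝ) ^ β := by
      rw [hsplit]
      have := mul_le_mul_of_nonneg_left hbig (Real.rpow_nonneg hk0.le κ)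
      calc 8 * (k:ℝ)^κ = ((k:ℝ)^κ * (8/c)) * c := by field_simp
        _ ≤ ((k:ℝ)^κ * (k:ℝ)^(β-κ)) * c := by
            apply mul_le_mul_of_nonneg_right this hc.le
        _ = c * ((k:ℝ)^κ * (k:ℝ)^(β-κ)) := by ring
    have hkβ : (k : ℝ) ≤ (k : ℝ) ^ β := by
      calc (k : ℝ) = (k : ℝ) ^ (1:ℝ) := (Real.rpow_one _).symm
        _ ≤ (k : ℝ) ^ β := Real.rpow_le_rpow_of_exponent_le hk1 hβ1
    have := mul_le_mul_of_nonneg_left hkβ (by linarith : (0:ℝ) ≤ c/2)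
    push_cast
    nlinarith
  have h0 : (0:ℝ) ≤ ((k : ℝ) + 1) ^ D := Real.rpow_nonneg (by linarith) _
  calc ((k : ℝ) + 1) ^ D * Real.exp (((k : ℝ) + 1) ^ κ - c * (k : ℝ) ^ β)
      ≤ ((k : ℝ) + 1) ^ n * q ^ k :=
        mul_le_mul hpow hexp (Real.exp_pos _).le (by positivity)
    _ = (((j + N : ℕ) : ℝ) + 1) ^ n * q ^ (j + N) := by rw [hk]

/-- The first induction step (estimate (3.5)) in the proof of Lemma 3.2:
a sub-Gaussian bound for `p_{2t}` with `t ∈ (0,1]`. -/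
theorem stmt_7
    {X : Type*} [MetricSpace X] [MeasurableSpace X] [BorelSpace X]
    (μ : Measure X)
    (hμ : ∀ (x : X) (r : ℝ), 0 < r → 0 < μ (ball x r) ∧ μ (ball x r) < ⊤)
    (m D κ : ℝ) (hm : 2 ≤ m) (hD : 1 ≤ D) (hκ0 : 0 ≤ κ) (hκ : κ < m / (m - 1))
    (hVD : ∀ (x : X) (τ r : ℝ), 1 ≤ τ → 0 < r →
      μ (ball x (τ * r)) ≤
        ENNReal.ofReal (D * τ ^ D * Real.exp (τ ^ κ + r ^ κ)) * μ (ball x r))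
    (p : ℝ → X → X → ℝ)
    (hp_nonneg : ∀ (t : ℝ) (x y : X), 0 < t → 0 ≤ p t x y)
    (hp_meas : Measurable fun q : ℝ × X × X => p q.1 q.2.1 q.2.2)
    (hp_symm : ∀ (t : ℝ) (x y : X), 0 < t → p t x y = p t y x)
    (hp_semigroup : ∀ (s t : ℝ) (x y : X), 0 < s → 0 < t →
      ENNReal.ofReal (p (s + t) x y) =
        ∫⁻ z, ENNReal.ofReal (p s x z) * ENNReal.ofReal (p t z y) ∂μ)
    (A c : ℝ) (hA : 0 < A) (hc : 0 < c)
    (hUB : ∀ (t : ℝ) (x y : X), 0 < t → t ≤ 1 →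
      p t x y ≤ A * Real.exp (-c * (dist x y ^ m / t) ^ (1 / (m - 1))) /
        (μ (ball x (t ^ (1 / m)))).toReal) :
    ∃ C c' : ℝ, 0 < C ∧ 0 < c' ∧ ∀ (t : ℝ) (x y : X), 0 < t → t ≤ 1 →
      p (2 * t) x y ≤ C *
        Real.exp (-c' * (dist x y ^ m / t) ^ (1 / (m - 1)) + (2 * t) ^ (κ / m)) /
        (μ (ball y ((2 * t) ^ (1 / m)))).toReal := by
  have hm1 : (0:ℝ) < m - 1 := by linarith
  have hm0 : (0:ℝ) < m := by linarith
  set β : ℝ := m / (m - 1) with hβ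
  have hβ1 : 1 ≤ β := by rw [hβ, le_div_iff₀ hm1]; linarith
  have hβ2 : β ≤ 2 := by rw [hβ, div_le_iff₀ hm1]; linarith
  have hκ2 : κ ≤ 2 := le_trans hκ.le hβ2
  have hD0 : (0:ℝ) ≤ D := by linarith
  -- the summable series
  have hsum : Summable (fun k : ℕ => ((k : ℝ) + 1) ^ D *
      Real.exp (((k : ℝ) + 1) ^ κ - (c/2) * (k : ℝ) ^ β)) :=
    aux_summable D κ (c/2) β hD0 hκ0 hκ2 (by positivity) hβ1 hκ
  set S : ℝ := ∑' k : ℕ, ((k : ℝ) + 1) ^ D *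
      Real.exp (((k : ℝ) + 1) ^ κ - (c/2) * (k : ℝ) ^ β) with hS
  have hS0 : 0 ≤ S := tsum_nonneg (fun k => by positivity)
  set Sc : ℝ := D * Real.exp 1 * S with hSc
  have hSc0 : 0 ≤ Sc := by positivity
  set C₂ : ℝ := D * 2 ^ D * Real.exp 5 with hC₂
  have hC₂0 : 0 < C₂ := by
    have : (0:ℝ) < (2:ℝ) ^ D := Real.rpow_pos_of_pos (by norm_num) _
    positivity
  refine ⟨max 1 (A^2 * Sc * C₂), c/8, lt_of_lt_of_le one_pos (le_max_left _ _),
    by positivity, ?_⟩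
  intro t x y ht ht1
  set r : ℝ := t ^ (1/m) with hr
  have hr0 : 0 < r := Real.rpow_pos_of_pos ht _
  have hr1 : r ≤ 1 := Real.rpow_le_one ht.le ht1 (by positivity)
  have hrm : r ^ m = t := by
    rw [hr, ← Real.rpow_mul ht.le, one_div_mul_cancel hm0.ne', Real.rpow_one]
  set d : ℝ := dist x y with hdd
  have hd0 : 0 ≤ d := dist_nonneg
  set X' : ℝ := (d ^ m / t) ^ (1/(m-1)) with hX'
  have hX'0 : 0 ≤ X' := Real.rpow_nonneg (by positivity) _
  set Ξ : ℝ := ((d/2) ^ m / t) ^ (1/(m-1)) with hΞ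
  have hΞ0 : 0 ≤ Ξ := Real.rpow_nonneg (by positivity) _
  have hΞX : Ξ = X' / 2 ^ β := by
    rw [hΞ, hX', Real.div_rpow hd0 (by norm_num), div_div, mul_comm ((2:ℝ)^m) t, ← div_div,
      Real.div_rpow (by positivity) (Real.rpow_nonneg (by norm_num) m),
      ← Real.rpow_mul (by norm_num : (0:ℝ) ≤ 2)]
    congr 1
    rw [hβ]; field_simp
  -- volumes
  have hVx := hμ x r hr0
  have hVy := hμ y r hr0
  set Vx : ℝ := (μ (ball x r)).toReal with hVxd
  set Vy : ℝ := (μ (ball y r)).toReal with hVyd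
  have hVx0 : 0 < Vx := ENNReal.toReal_pos hVx.1.ne' hVx.2.ne
  have hVy0 : 0 < Vy := ENNReal.toReal_pos hVy.1.ne' hVy.2.ne
  set M : ℝ := A^2 / (Vx * Vy) * Real.exp (-(c/2) * Ξ) with hM
  have hM0 : 0 ≤ M := by positivity
  -- pointwise bound
  have key : ∀ z : X, p t x z * p t z y ≤
      M * Real.exp (-(c/2) * (dist x z ^ m / t) ^ (1/(m-1))) := by
    intro z
    set ξ : ℝ := (dist x z ^ m / t) ^ (1/(m-1)) with hξ
    have hξ0 : 0 ≤ ξ := Real.rpow_nonneg (by positivity) _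
    have b1 : p t x z ≤ A * Real.exp (-c * ξ) / Vx := hUB t x z ht ht1
    have b2 : p t z y ≤ A * Real.exp (-c * (dist y z ^ m / t) ^ (1/(m-1))) / Vy := by
      rw [hp_symm t z y ht]; exact hUB t y z ht ht1
    set η : ℝ := (dist y z ^ m / t) ^ (1/(m-1)) with hη
    have hη0 : 0 ≤ η := Real.rpow_nonneg (by positivity) _
    have htri : d ≤ dist x z + dist z y := dist_triangle x z y
    have mono : ∀ a : ℝ, d/2 ≤ a → Ξ ≤ (a ^ m / t) ^ (1/(m-1)) := by
      intro a ha
      apply Real.rpow_le_rpow (by positivity) _ (by positivity)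
      have h1 : (d/2) ^ m ≤ a ^ m := Real.rpow_le_rpow (by positivity) ha hm0.le
      exact by gcongr
    rcases le_or_gt (d/2) (dist z y) with hcase | hcase
    · have hη2 : Ξ ≤ η := by rw [hη, dist_comm y z]; exact mono _ hcase
      have e1 : Real.exp (-c * ξ) ≤ Real.exp (-(c/2) * ξ) := by
        apply Real.exp_le_exp.2; nlinarith
      have e2 : Real.exp (-c * η) ≤ Real.exp (-(c/2) * Ξ) := by
        apply Real.exp_le_exp.2; nlinarith
      calc p t x z * p t z y
          ≤ (A * Real.exp (-(c/2) * ξ) / Vx) * (A * Real.exp (-(c/2) * Ξ) / Vy) := by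
            apply mul_le_mul (b1.trans _) (b2.trans _) (hp_nonneg t z y ht) (by positivity)
            · gcongr
            · gcongr
        _ = M * Real.exp (-(c/2) * ξ) := by rw [hM]; ring
    · have hxz : d/2 ≤ dist x z := by
        have := dist_triangle x z y; linarith
      have hξ2 : Ξ ≤ ξ := mono _ hxz
      have e1 : Real.exp (-c * ξ) ≤ Real.exp (-(c/2) * Ξ) * Real.exp (-(c/2) * ξ) := by
        rw [← Real.exp_add]; apply Real.exp_le_exp.2; nlinarith
      have e2 : Real.exp (-c * η) ≤ 1 := Real.exp_le_one_iff.2 (by nlinarith)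
      calc p t x z * p t z y
          ≤ (A * (Real.exp (-(c/2) * Ξ) * Real.exp (-(c/2) * ξ)) / Vx) * (A * 1 / Vy) := by
            apply mul_le_mul (b1.trans _) (b2.trans _) (hp_nonneg t z y ht) (by positivity)
            · gcongr
            · gcongr
        _ = M * Real.exp (-(c/2) * ξ) := by rw [hM]; ring
  -- semigroup identity
  have h2t : ENNReal.ofReal (p (2*t) x y) =
      ∫⁻ z, ENNReal.ofReal (p t x z) * ENNReal.ofReal (p t z y) ∂μ := by
    rw [two_mul]; exact hp_semigroup t t x y ht ht
  set G : ℕ → ℝ≥0∞ := fun k => ENNReal.ofReal (M * Real.exp (-(c/2) * (k:ℝ)^β)) with hG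
  set Ak : ℕ → Set X := fun k => ball x (((k:ℝ)+1) * r) \ ball x ((k:ℝ) * r) with hAk
  have hAkm : ∀ k, MeasurableSet (Ak k) := fun k => measurableSet_ball.diff measurableSet_ball
  have hkβ : ∀ (k : ℕ), (((k:ℝ) * r) ^ m / t) ^ (1/(m-1)) = (k:ℝ)^β := by
    intro k
    rw [Real.mul_rpow (Nat.cast_nonneg k) hr0.le, hrm, mul_div_assoc, div_self ht.ne',
      mul_one, ← Real.rpow_mul (Nat.cast_nonneg k)]
    congr 1
    rw [hβ, mul_one_div]
  -- pointwise domination by the indicator series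
  have hptw : ∀ z, ENNReal.ofReal (p t x z) * ENNReal.ofReal (p t z y) ≤
      ∑' k, (Ak k).indicator (fun _ => G k) z := by
    intro z
    set k : ℕ := ⌊dist x z / r⌋₊ with hk
    have hzr0 : 0 ≤ dist x z / r := by positivity
    have hlow : (k:ℝ) * r ≤ dist x z := by
      have := Nat.floor_le hzr0
      rw [le_div_iff₀ hr0] at this
      exact this
    have hmem : z ∈ Ak k := by
      constructor
      · rw [mem_ball, dist_comm]
        have := Nat.lt_floor_add_one (dist x z / r)
        rw [div_lt_iff₀ hr0] at this
        exact this
      · rw [mem_ball, dist_comm, not_lt]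
        exact hlow
    have hb : ENNReal.ofReal (p t x z) * ENNReal.ofReal (p t z y) ≤ G k := by
      rw [← ENNReal.ofReal_mul (hp_nonneg t x z ht)]
      apply ENNReal.ofReal_le_ofReal
      refine (key z).trans ?_
      apply mul_le_mul_of_nonneg_left _ hM0
      apply Real.exp_le_exp.2
      have h1 : (k:ℝ)^β ≤ (dist x z ^ m / t) ^ (1/(m-1)) := by
        rw [← hkβ k]
        apply Real.rpow_le_rpow (by positivity) _ (by positivity)
        have h2 : ((k:ℝ)*r) ^ m ≤ dist x z ^ m :=
          Real.rpow_le_rpow (by positivity) hlow hm0.le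
        exact by gcongr
      have h7 := mul_le_mul_of_nonneg_left h1 (by positivity : (0:ℝ) ≤ c/2)
      linarith
    calc ENNReal.ofReal (p t x z) * ENNReal.ofReal (p t z y) ≤ G k := hb
      _ = (Ak k).indicator (fun _ => G k) z := by rw [Set.indicator_of_mem hmem]
      _ ≤ ∑' j, (Ak j).indicator (fun _ => G j) z := ENNReal.le_tsum k
  -- integrate
  have hint : ENNReal.ofReal (p (2*t) x y) ≤ ∑' k, G k * μ (Ak k) := by
    rw [h2t]
    calc ∫⁻ z, ENNReal.ofReal (p t x z) * ENNReal.ofReal (p t z y) ∂μ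
        ≤ ∫⁻ z, ∑' k, (Ak k).indicator (fun _ => G k) z ∂μ := lintegral_mono hptw
      _ = ∑' k, ∫⁻ z, (Ak k).indicator (fun _ => G k) z ∂μ :=
          lintegral_tsum (fun k => (measurable_const.indicator (hAkm k)).aemeasurable)
      _ = ∑' k, G k * μ (Ak k) := by
          exact tsum_congr fun k => lintegral_indicator_const (hAkm k) (G k)
  have hmono2 : ∀ k : ℕ, μ (Ak k) ≤
      ENNReal.ofReal (D * ((k:ℝ)+1)^D * Real.exp (((k:ℝ)+1)^κ + r^κ)) * μ (ball x r) :=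
    fun k => le_trans (measure_mono Set.diff_subset)
      (hVD x ((k:ℝ)+1) r (by have := Nat.cast_nonneg (α := ℝ) k; linarith) hr0)
  have hrκ : r ^ κ ≤ 1 := Real.rpow_le_one hr0.le hr1 hκ0
  have hGb : ∀ k : ℕ, G k * ENNReal.ofReal (D * ((k:ℝ)+1)^D * Real.exp (((k:ℝ)+1)^κ + r^κ)) ≤
      ENNReal.ofReal (M * (D * Real.exp 1 *
        (((k:ℝ)+1)^D * Real.exp (((k:ℝ)+1)^κ - (c/2)*(k:ℝ)^β)))) := by
    intro k
    rw [hG, ← ENNReal.ofReal_mul (by positivity)]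
    apply ENNReal.ofReal_le_ofReal
    have h1 : Real.exp (-(c/2)*(k:ℝ)^β) * (D * ((k:ℝ)+1)^D * Real.exp (((k:ℝ)+1)^κ + r^κ))
        ≤ D * Real.exp 1 * (((k:ℝ)+1)^D * Real.exp (((k:ℝ)+1)^κ - (c/2)*(k:ℝ)^β)) := by
      have hmono3 := Real.exp_le_exp.2 (show -(c/2)*(k:ℝ)^β + (((k:ℝ)+1)^κ + r^κ) ≤
        1 + (((k:ℝ)+1)^κ - (c/2)*(k:ℝ)^β) by linarith)
      have hP : (0:ℝ) ≤ D * ((k:ℝ)+1)^D := by positivity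
      calc Real.exp (-(c/2)*(k:ℝ)^β) * (D * ((k:ℝ)+1)^D * Real.exp (((k:ℝ)+1)^κ + r^κ))
          = D * ((k:ℝ)+1)^D * Real.exp (-(c/2)*(k:ℝ)^β + (((k:ℝ)+1)^κ + r^κ)) := by
            simp only [Real.exp_add]; ring
        _ ≤ D * ((k:ℝ)+1)^D * Real.exp (1 + (((k:ℝ)+1)^κ - (c/2)*(k:ℝ)^β)) :=
            mul_le_mul_of_nonneg_left hmono3 hP
        _ = D * Real.exp 1 * (((k:ℝ)+1)^D * Real.exp (((k:ℝ)+1)^κ - (c/2)*(k:ℝ)^β)) := by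
            simp only [Real.exp_add]; ring
    calc M * Real.exp (-(c/2)*(k:ℝ)^β) * (D * ((k:ℝ)+1)^D * Real.exp (((k:ℝ)+1)^κ + r^κ))
        = M * (Real.exp (-(c/2)*(k:ℝ)^β) * (D * ((k:ℝ)+1)^D *
            Real.exp (((k:ℝ)+1)^κ + r^κ))) := by ring
      _ ≤ M * (D * Real.exp 1 * (((k:ℝ)+1)^D * Real.exp (((k:ℝ)+1)^κ - (c/2)*(k:ℝ)^β))) :=
          mul_le_mul_of_nonneg_left h1 hM0
  have hsum2 : Summable (fun k : ℕ => M * (D * Real.exp 1 *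
      (((k:ℝ)+1)^D * Real.exp (((k:ℝ)+1)^κ - (c/2)*(k:ℝ)^β)))) :=
    (hsum.mul_left (D * Real.exp 1)).mul_left M
  have hfinal1 : ENNReal.ofReal (p (2*t) x y) ≤
      ENNReal.ofReal (M * (D * Real.exp 1 * S)) * μ (ball x r) := by
    refine hint.trans ?_
    calc ∑' k, G k * μ (Ak k)
        ≤ ∑' k, (G k * ENNReal.ofReal (D * ((k:ℝ)+1)^D *
            Real.exp (((k:ℝ)+1)^κ + r^κ))) * μ (ball x r) := by
          refine ENNReal.tsum_le_tsum fun k => ?_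
          rw [mul_assoc]
          exact mul_le_mul_right (hmono2 k) _
      _ = (∑' k, G k * ENNReal.ofReal (D * ((k:ℝ)+1)^D *
            Real.exp (((k:ℝ)+1)^κ + r^κ))) * μ (ball x r) := ENNReal.tsum_mul_right
      _ ≤ (∑' k : ℕ, ENNReal.ofReal (M * (D * Real.exp 1 *
            (((k:ℝ)+1)^D * Real.exp (((k:ℝ)+1)^κ - (c/2)*(k:ℝ)^β))))) * μ (ball x r) :=
          mul_le_mul_left (ENNReal.tsum_le_tsum hGb) _
      _ = ENNReal.ofReal (M * (D * Real.exp 1 * S)) * μ (ball x r) := by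
          rw [← ENNReal.ofReal_tsum_of_nonneg (fun k => by positivity) hsum2]
          congr 1
          rw [hS, tsum_mul_left, tsum_mul_left]
  have hreal : p (2*t) x y ≤ A^2 * Sc * Real.exp (-(c/2)*Ξ) / Vy := by
    have hfin : μ (ball x r) = ENNReal.ofReal Vx := (ENNReal.ofReal_toReal hVx.2.ne).symm
    have h3 := hfinal1
    rw [hfin, ← ENNReal.ofReal_mul (by positivity)] at h3
    have h2 := (ENNReal.ofReal_le_ofReal_iff (by positivity)).1 h3
    calc p (2*t) x y ≤ M * (D * Real.exp 1 * S) * Vx := h2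
      _ = A^2 * Sc * Real.exp (-(c/2)*Ξ) / Vy := by
          rw [hM, hSc]; field_simp
  -- volume comparison at scale (2t)^{1/m}
  set R2 : ℝ := (2*t) ^ (1/m) with hR2d
  have hR2 : R2 = 2 ^ (1/m) * r := by
    rw [hR2d, hr, Real.mul_rpow (by norm_num) ht.le]
  have hτ1 : 1 ≤ (2:ℝ) ^ (1/m) := by
    calc (1:ℝ) = 1 ^ (1/m) := (Real.one_rpow _).symm
      _ ≤ 2 ^ (1/m) := Real.rpow_le_rpow (by norm_num) (by norm_num) (by positivity)
  have hτ2 : (2:ℝ) ^ (1/m) ≤ 2 := by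
    calc (2:ℝ) ^ (1/m) ≤ 2 ^ (1:ℝ) :=
          Real.rpow_le_rpow_of_exponent_le (by norm_num)
            (by rw [div_le_one hm0]; linarith)
      _ = 2 := Real.rpow_one 2
  have h24 : (2:ℝ) ^ (2:ℝ) = 4 := by
    rw [show (2:ℝ) = ((2:ℕ):ℝ) by norm_num, Real.rpow_natCast]; norm_num
  have hV2 : (μ (ball y R2)).toReal ≤ C₂ * Vy := by
    have h1 := hVD y ((2:ℝ)^(1/m)) r hτ1 hr0
    have hb : D * ((2:ℝ)^(1/m))^D * Real.exp (((2:ℝ)^(1/m))^κ + r^κ) ≤ C₂ := by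
      have hp1 : ((2:ℝ)^(1/m))^D ≤ 2^D := Real.rpow_le_rpow (by positivity) hτ2 hD0
      have hp2 : ((2:ℝ)^(1/m))^κ ≤ 4 := by
        calc ((2:ℝ)^(1/m))^κ ≤ 2^κ := Real.rpow_le_rpow (by positivity) hτ2 hκ0
          _ ≤ 2^(2:ℝ) := Real.rpow_le_rpow_of_exponent_le (by norm_num) hκ2
          _ = 4 := h24
      have he : Real.exp (((2:ℝ)^(1/m))^κ + r^κ) ≤ Real.exp 5 :=
        Real.exp_le_exp.2 (by linarith)
      rw [hC₂]
      calc D * ((2:ℝ)^(1/m))^D * Real.exp (((2:ℝ)^(1/m))^κ + r^κ)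
          ≤ D * 2^D * Real.exp (((2:ℝ)^(1/m))^κ + r^κ) :=
            mul_le_mul_of_nonneg_right (mul_le_mul_of_nonneg_left hp1 hD0) (Real.exp_pos _).le
        _ ≤ D * 2^D * Real.exp 5 := by
            apply mul_le_mul_of_nonneg_left he
            have : (0:ℝ) < (2:ℝ)^D := Real.rpow_pos_of_pos (by norm_num) _
            positivity
    calc (μ (ball y R2)).toReal ≤ (ENNReal.ofReal C₂ * μ (ball y r)).toReal := by
          apply ENNReal.toReal_mono
          · exact ENNReal.mul_ne_top ENNReal.ofReal_ne_top hVy.2.ne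
          · rw [hR2]
            exact h1.trans (mul_le_mul_left (ENNReal.ofReal_le_ofReal hb) _)
      _ = C₂ * Vy := by rw [ENNReal.toReal_mul, ENNReal.toReal_ofReal hC₂0.le]
  have hV20 : 0 < (μ (ball y R2)).toReal := by
    have h5 := hμ y R2 (Real.rpow_pos_of_pos (by linarith) _)
    exact ENNReal.toReal_pos h5.1.ne' h5.2.ne
  -- exponent comparison
  have hexp2 : Real.exp (-(c/2)*Ξ) ≤ Real.exp (-(c/8) * X' + (2*t)^(κ/m)) := by
    apply Real.exp_le_exp.2
    have h2β : (2:ℝ)^β ≤ 4 := by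
      calc (2:ℝ)^β ≤ 2^(2:ℝ) := Real.rpow_le_rpow_of_exponent_le (by norm_num) hβ2
        _ = 4 := h24
    have h2β0 : (0:ℝ) < (2:ℝ)^β := Real.rpow_pos_of_pos (by norm_num) _
    have hterm : (0:ℝ) ≤ (2*t)^(κ/m) := Real.rpow_nonneg (by linarith) _
    rw [hΞX]
    have hdiv : c/8 ≤ (c/2) / 2^β := by
      rw [le_div_iff₀ h2β0]
      have h8 := mul_le_mul_of_nonneg_left h2β (by positivity : (0:ℝ) ≤ c/8)
      linarith
    have h6 : (c/8)*X' ≤ (c/2)*(X'/2^β) := by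
      have := mul_le_mul_of_nonneg_right hdiv hX'0
      calc (c/8)*X' ≤ (c/2)/2^β * X' := this
        _ = (c/2)*(X'/2^β) := by ring
    linarith
  -- conclusion
  refine hreal.trans ?_
  calc A^2 * Sc * Real.exp (-(c/2)*Ξ) / Vy
      ≤ A^2 * Sc * Real.exp (-(c/8) * X' + (2*t)^(κ/m)) / Vy := by gcongr
    _ ≤ (A^2 * Sc * C₂) * Real.exp (-(c/8) * X' + (2*t)^(κ/m)) / (μ (ball y R2)).toReal := by
        rw [div_le_div_iff₀ hVy0 hV20]
        calc A^2 * Sc * Real.exp (-(c/8) * X' + (2*t)^(κ/m)) * (μ (ball y R2)).toReal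
            ≤ A^2 * Sc * Real.exp (-(c/8) * X' + (2*t)^(κ/m)) * (C₂ * Vy) :=
              mul_le_mul_of_nonneg_left hV2 (by positivity)
          _ = A^2 * Sc * C₂ * Real.exp (-(c/8) * X' + (2*t)^(κ/m)) * Vy := by ring
    _ ≤ max 1 (A^2 * Sc * C₂) * Real.exp (-(c/8) * X' + (2*t)^(κ/m)) /
          (μ (ball y R2)).toReal := by
        gcongr
        exact le_max_right _ _
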